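/- The dimension of the 2D serendipity space S_k = P_k(x,y) + span{x^k y, x y^k} equals dim P_k(x,y) + 2 = (k+1)(k+2)/2 + 2 for every k ≥ 2, and this equals the number of its degrees of freedom on a rectangle: 4 vertex values, 4(k-1) edge values, and dim P_{k-4} interior moments, where dim P_{k-4} = (k-3)(k-2)/2 for k ≥ 4 and dim P_{k-4} = 0 for k < 4 (so that for k = 2, 3 the count is 4 + 4(k-1)). -/

import Mathlib

open MvPolynomial

/-- The 2D serendipity space `S_k = P_k(x,y) + span{x^k y, x y^k}` as a submodule of the
bivariate polynomial ring. -/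
noncomputable def serendipitySpace (k : ℕ) : Submodule ℝ (MvPolynomial (Fin 2) ℝ) :=
  MvPolynomial.restrictTotalDegree (Fin 2) ℝ k ⊔
    Submodule.span ℝ {X 0 ^ k * X 1, X 0 * X 1 ^ k}

private lemma serendipity_gauss_sum (k : ℕ) :
    2 * ∑ n ∈ Finset.range (k + 1), (n + 1) = (k + 1) * (k + 2) := by
  induction k with
  | zero => simp
  | succ k ih => rw [Finset.sum_range_succ, Nat.mul_add, ih]; ring

/-- The dimension of the serendipity space `S_k` is `dim P_k + 2 = (k+1)(k+2)/2 + 2` for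
`k ≥ 2`, and this number coincides with the count of its degrees of freedom on a rectangle:
`4` vertex values, `4(k-1)` edge values and `(k-3)(k-2)/2` interior moments. -/
theorem serendipity_dimension (k : ℕ) (hk : 2 ≤ k) :
    Module.finrank ℝ (serendipitySpace k) = (k + 1) * (k + 2) / 2 + 2 ∧
      (k + 1) * (k + 2) / 2 + 2 = 4 + 4 * (k - 1) + (k - 3) * (k - 2) / 2 := by
  constructor
  · -- the dimension count
    set d1 : Fin 2 →₀ ℕ := Finsupp.single 0 k + Finsupp.single 1 1 with hd1
    set d2 : Fin 2 →₀ ℕ := Finsupp.single 0 1 + Finsupp.single 1 k with hd2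
    set S : Set (Fin 2 →₀ ℕ) := { n | (n.sum fun _ e => e) ≤ k } ∪ {d1, d2} with hS
    set F : Finset (ℕ × ℕ) :=
      ((Finset.range (k+1)).biUnion fun n => Finset.HasAntidiagonal.antidiagonal n) ∪ {(k,1),(1,k)} with hF
    -- the serendipity space is the span of the monomials with exponents in `S`
    have hm1 : (X 0 ^ k * X 1 : MvPolynomial (Fin 2) ℝ) = monomial d1 1 := by
      rw [hd1, X_pow_eq_monomial, X, monomial_mul, mul_one]
    have hm2 : (X 0 * X 1 ^ k : MvPolynomial (Fin 2) ℝ) = monomial d2 1 := by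
      rw [hd2, X_pow_eq_monomial, X, monomial_mul, mul_one]
    have hspan : Submodule.span ℝ {(X 0 ^ k * X 1 : MvPolynomial (Fin 2) ℝ), X 0 * X 1 ^ k}
        = restrictSupport ℝ {d1, d2} := by
      rw [restrictSupport, AddMonoidAlgebra.supported_eq_span_single, Set.image_pair, hm1, hm2]
      simp [single_eq_monomial]
    have hsp : serendipitySpace k = restrictSupport ℝ S := by
      rw [serendipitySpace, hspan, hS, restrictTotalDegree, restrictSupport, restrictSupport,
        restrictSupport, AddMonoidAlgebra.supported_eq_map, AddMonoidAlgebra.supported_eq_map,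
        AddMonoidAlgebra.supported_eq_map, Finsupp.supported_union, Submodule.map_sup]
    -- membership in `S` matches membership of the exponent pair in `F`
    have key : ∀ (n : Fin 2 →₀ ℕ) (a b : ℕ),
        n = Finsupp.single 0 a + Finsupp.single 1 b ↔ n 0 = a ∧ n 1 = b := by
      intro n a b
      constructor
      · rintro rfl; simp [Finsupp.single_apply]
      · rintro ⟨h0, h1⟩
        ext i
        fin_cases i <;> simp [Finsupp.single_apply, h0, h1]
    have hsum : ∀ n : Fin 2 →₀ ℕ, (n.sum fun _ e => e) = n 0 + n 1 := by
      intro n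
      rw [Finsupp.sum_fintype _ _ (fun _ => rfl), Fin.sum_univ_two]
    have hmem : ∀ n : Fin 2 →₀ ℕ, n ∈ S ↔ (n 0, n 1) ∈ F := by
      intro n
      simp only [hS, hF, Set.mem_union, Set.mem_setOf_eq, Set.mem_insert_iff,
        Set.mem_singleton_iff, Finset.mem_union, Finset.mem_biUnion, Finset.mem_range,
        Finset.HasAntidiagonal.mem_antidiagonal, Finset.mem_insert, Finset.mem_singleton,
        Prod.mk.injEq, hsum, hd1, hd2, key]
      have : (∃ a < k + 1, n 0 + n 1 = a) ↔ n 0 + n 1 ≤ k := by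
        constructor
        · rintro ⟨a, ha, rfl⟩; omega
        · exact fun h => ⟨_, by omega, rfl⟩
      rw [this]
    -- `S` is the preimage of `F` under the evaluation equivalence
    set e : (Fin 2 →₀ ℕ) ≃ (ℕ × ℕ) :=
      (Finsupp.equivFunOnFinite).trans (finTwoArrowEquiv ℕ) with he
    have hpre : S = e ⁻¹' ↑F := by
      ext n
      rw [Set.mem_preimage, Finset.mem_coe, hmem n]
      rfl
    have hfin : S.Finite := by
      rw [hpre]; exact F.finite_toSet.preimage e.injective.injOn
    haveI : Fintype S := hfin.fintype
    -- the rank is the cardinality of `S`, i.e. of `F`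
    have himg : e '' S = ↑F := by
      rw [hpre, Set.image_preimage_eq _ e.surjective]
    have hcard : Nat.card S = F.card := by
      rw [Nat.card_coe_set_eq, ← Set.ncard_coe_finset, ← himg,
        Set.ncard_image_of_injective S e.injective]
    -- compute the cardinality of `F`
    have hFcard : F.card = (k + 1) * (k + 2) / 2 + 2 := by
      rw [hF, Finset.card_union_of_disjoint, Finset.card_biUnion]
      · have h2 : ({(k,1),(1,k)} : Finset (ℕ × ℕ)).card = 2 :=
          Finset.card_pair (by simp; omega)
        have hsum2 : 2 * ∑ n ∈ Finset.range (k+1), (Finset.HasAntidiagonal.antidiagonal n).card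
            = (k+1) * (k+2) := by
          simp only [Finset.Nat.card_antidiagonal]
          exact serendipity_gauss_sum k
        omega
      · intro a _ b _ hab
        simp only [Finset.disjoint_left, Finset.HasAntidiagonal.mem_antidiagonal]
        omega
      · simp only [Finset.disjoint_left, Finset.mem_biUnion, Finset.mem_range,
          Finset.HasAntidiagonal.mem_antidiagonal, Finset.mem_insert, Finset.mem_singleton]
        rintro ⟨a, b⟩ ⟨n, hn, rfl⟩
        simp only [Prod.mk.injEq, not_or]
        omega
    rw [hsp, Module.finrank_eq_card_basis (basisRestrictSupport ℝ S),
      ← Nat.card_eq_fintype_card, hcard, hFcard]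
  · -- the degree-of-freedom count
    rcases Nat.lt_or_ge k 3 with h | h
    · interval_cases k; rfl
    · obtain ⟨m, rfl⟩ : ∃ m, k = m + 3 := ⟨k - 3, by omega⟩
      have key : (m + 3 - 3) * (m + 3 - 2) + 8 * (m + 3) = (m + 3 + 1) * (m + 3 + 2) + 4 := by
        show m * (m + 1) + 8 * (m + 3) = (m + 4) * (m + 5) + 4
        ring
      have h1 : 2 * ((m + 3 + 1) * (m + 3 + 2) / 2) = (m + 3 + 1) * (m + 3 + 2) :=
        Nat.two_mul_div_two_of_even (Nat.even_mul_succ_self (m + 3 + 1))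
      have h2 : 2 * ((m + 3 - 3) * (m + 3 - 2) / 2) = (m + 3 - 3) * (m + 3 - 2) := by
        refine Nat.two_mul_div_two_of_even ?_
        show Even (m * (m + 1))
        exact Nat.even_mul_succ_self m
      omega
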